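/- Let Γ be a Blackwell game with finitely many players, finite action sets, and bounded, Borel-measurable, tail-measurable payoff functions, and let ε > 0. If there exist a strategy profile σ and some δ ∈ [0, ε) such that E_σ[f_i | h] ≥ v̄_i − δ for every player i ∈ I and every history h ∈ H, then Γ admits an ε-equilibrium. -/

import Mathlib

open MeasureTheory

namespace Blackwell

/-- The set of plays: infinite streams of action profiles. -/
abbrev Play {ι : Type*} (Ac : ι → Type*) : Type _ := ℕ → ∀ j, Ac j

/-- A behavior strategy of player `i`: a mixed action after every finite history.
A history of length `t` is encoded by the first `t` coordinates of a play, and the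
strategy is required to depend only on these coordinates. -/
structure Strategy {ι : Type*} (Ac : ι → Type*) (i : ι) where
  act : ℕ → Play Ac → PMF (Ac i)
  depends_on_past : ∀ (t : ℕ) (p q : Play Ac), (∀ s, s < t → p s = q s) → act t p = act t q

/-- A strategy profile: a behavior strategy for every player. -/
abbrev Profile {ι : Type*} (Ac : ι → Type*) : Type _ := ∀ i, Strategy Ac i

/-- The assignment, to each strategy profile `σ`, of the induced (Ionescu–Tulcea)
probability measure `P_σ` on the set of plays; it is uniquely characterized by the
probabilities it assigns to cylinder sets. -/
structure PlayMeasure {ι : Type*} [Fintype ι] (Ac : ι → Type*)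
    [∀ i, MeasurableSpace (Ac i)] where
  μ : Profile Ac → Measure (Play Ac)
  isProb : ∀ σ, IsProbabilityMeasure (μ σ)
  cyl : ∀ (σ : Profile Ac) (n : ℕ) (p : Play Ac),
    μ σ {q | ∀ t, t < n → q t = p t}
      = ∏ t ∈ Finset.range n, ∏ i, ((σ i).act t p) (p t i)

variable {ι : Type*} [Fintype ι] [DecidableEq ι] [Nonempty ι]
  {Ac : ι → Type*} [∀ i, Fintype (Ac i)] [∀ i, Nonempty (Ac i)]
  [∀ i, MeasurableSpace (Ac i)] [∀ i, DiscreteMeasurableSpace (Ac i)]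

/-- The expected payoff `E_σ[f]` of a strategy profile `σ` for payoff function `f`. -/
noncomputable def expPay (PM : PlayMeasure Ac) (σ : Profile Ac) (f : Play Ac → ℝ) : ℝ :=
  ∫ p, f p ∂(PM.μ σ)

/-- Concatenation of the history given by the first `n` coordinates of `h` with the play `q`. -/
def splice (n : ℕ) (h q : Play Ac) : Play Ac := fun t => if t < n then h t else q (t - n)

/-- The continuation of a strategy in the subgame that starts at the history
given by the first `n` coordinates of `h`. -/
def Strategy.shift {i : ι} (σi : Strategy Ac i) (n : ℕ) (h : Play Ac) : Strategy Ac i where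
  act t q := σi.act (n + t) (splice n h q)
  depends_on_past := by
    intro t p q hpq
    refine σi.depends_on_past _ _ _ ?_
    intro s hs
    simp only [splice]
    by_cases hsn : s < n
    · simp [hsn]
    · simp only [if_neg hsn]
      exact hpq (s - n) (by omega)

/-- The expected payoff `E_σ[f ∣ h]` in the subgame that starts at the history
given by the first `n` coordinates of `h`. -/
noncomputable def subExp (PM : PlayMeasure Ac) (σ : Profile Ac) (f : Play Ac → ℝ)
    (n : ℕ) (h : Play Ac) : ℝ :=
  ∫ q, f (splice n h q) ∂(PM.μ (fun i => (σ i).shift n h))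

/-- The minmax value of player `i`. -/
noncomputable def minmax (PM : PlayMeasure Ac) (f : Play Ac → ℝ) (i : ι) : ℝ :=
  ⨅ τ : Profile Ac, ⨆ σi : Strategy Ac i, expPay PM (Function.update τ i σi) f

/-- The maxmin value of player `i`. -/
noncomputable def maxmin (PM : PlayMeasure Ac) (f : Play Ac → ℝ) (i : ι) : ℝ :=
  ⨆ σi : Strategy Ac i, ⨅ τ : Profile Ac, expPay PM (Function.update τ i σi) f

/-- The minmax value of player `i` in the subgame that starts at the history
given by the first `n` coordinates of `h`. -/
noncomputable def subMinmax (PM : PlayMeasure Ac) (f : Play Ac → ℝ) (i : ι)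
    (n : ℕ) (h : Play Ac) : ℝ :=
  ⨅ τ : Profile Ac, ⨆ σi : Strategy Ac i, subExp PM (Function.update τ i σi) f n h

/-- The maxmin value of player `i` in the subgame that starts at the history
given by the first `n` coordinates of `h`. -/
noncomputable def subMaxmin (PM : PlayMeasure Ac) (f : Play Ac → ℝ) (i : ι)
    (n : ℕ) (h : Play Ac) : ℝ :=
  ⨆ σi : Strategy Ac i, ⨅ τ : Profile Ac, subExp PM (Function.update τ i σi) f n h

/-- A strategy profile `σ` is an `ε`-equilibrium if no player can gain more than `ε`
by a unilateral deviation. -/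
def IsEpsEquilibrium (PM : PlayMeasure Ac) (f : ι → Play Ac → ℝ) (ε : ℝ)
    (σ : Profile Ac) : Prop :=
  ∀ (i : ι) (σi : Strategy Ac i),
    expPay PM (Function.update σ i σi) (f i) ≤ expPay PM σ (f i) + ε

/-- A payoff function is tail-measurable if changing finitely many coordinates of the
play does not change its value. -/
def TailMeasurable (f : Play Ac → ℝ) : Prop :=
  ∀ p q : Play Ac, (∃ N, ∀ t, N ≤ t → p t = q t) → f p = f q

/-- A payoff function is bounded. -/
def BddPayoff (f : Play Ac → ℝ) : Prop := ∃ C, ∀ p, |f p| ≤ C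

end Blackwell

/-!
By Lévy's zero-one law the subgame payoffs `E_σ[f_i | h]` converge along almost every play to the
payoff of that play, so some play `p*` pays every player at least her minmax value minus `δ`.
Tail-measurability makes the minmax value of every subgame at most that of the whole game, so
after any history the others can hold a deviator to within `ε - δ` of her minmax value. The
grim-trigger profile that follows `p*` and punishes the first unilateral deviator in this way is
therefore an `ε`-equilibrium.
-/

namespace Blackwell

section Plays

variable {ι : Type*} {Ac : ι → Type*}

@[ext]
theorem Strategy.ext {i : ι} {σi τi : Strategy Ac i} (h : σi.act = τi.act) : σi = τi := by
  cases σi; cases τi; cases h; rfl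

instance {i : ι} [Nonempty (Ac i)] : Nonempty (Strategy Ac i) :=
  ⟨⟨fun _ _ => PMF.pure (Classical.arbitrary _), fun _ _ _ _ => rfl⟩⟩

def cyl (n : ℕ) (p : Play Ac) : Set (Play Ac) := {q | ∀ t < n, q t = p t}

def drop (n : ℕ) (p : Play Ac) : Play Ac := fun s => p (n + s)

theorem splice_mem_cyl (n : ℕ) (h q : Play Ac) : splice n h q ∈ cyl n h := by
  intro t ht; simp [splice, ht]

theorem splice_zero (h q : Play Ac) : splice 0 h q = q := by
  funext t; simp [splice]

theorem splice_congr {n : ℕ} {h h' : Play Ac} (hh : h ∈ cyl n h') (q : Play Ac) :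
    splice n h q = splice n h' q := by
  funext t; simp only [splice]; split
  · exact hh t ‹_›
  · rfl

theorem splice_add_apply (n : ℕ) (h q : Play Ac) (s : ℕ) : splice n h q (n + s) = q s := by
  simp [splice]

theorem drop_splice (n : ℕ) (h q : Play Ac) : drop n (splice n h q) = q := by
  funext s; simp [drop, splice]

theorem splice_drop {n : ℕ} {h p : Play Ac} (hp : p ∈ cyl n h) : splice n h (drop n p) = p := by
  funext t
  by_cases ht : t < n
  · simp [splice, ht, hp t ht]
  · simp [splice, drop, ht, Nat.add_sub_cancel' (not_lt.1 ht)]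

theorem Strategy.shift_congr {i : ι} (σi : Strategy Ac i) {n : ℕ} {h h' : Play Ac}
    (hh : h ∈ cyl n h') : σi.shift n h = σi.shift n h' :=
  Strategy.ext (funext₂ fun t q => by simp only [Strategy.shift, splice_congr hh q])

def Profile.shift (ρ : Profile Ac) (n : ℕ) (h : Play Ac) : Profile Ac :=
  fun j => (ρ j).shift n h

theorem Profile.shift_update [DecidableEq ι] (ρ : Profile Ac) (i : ι) (σi : Strategy Ac i)
    (n : ℕ) (h : Play Ac) :
    Profile.shift (Function.update ρ i σi) n h
      = Function.update (ρ.shift n h) i (σi.shift n h) :=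
  funext fun j => Function.apply_update (fun _ s => Strategy.shift s n h) ρ i σi j

noncomputable def trunc [∀ i, Nonempty (Ac i)] (n : ℕ) (h : Play Ac) : Play Ac :=
  splice n h fun _ _ => Classical.arbitrary _

theorem trunc_congr [∀ i, Nonempty (Ac i)] {n : ℕ} {h h' : Play Ac} (hh : h ∈ cyl n h') :
    trunc n h = trunc n h' :=
  splice_congr hh _

theorem trunc_mem_cyl [∀ i, Nonempty (Ac i)] (n : ℕ) (h : Play Ac) : trunc n h ∈ cyl n h :=
  splice_mem_cyl n h _

theorem splice_trunc [∀ i, Nonempty (Ac i)] (n : ℕ) (h q : Play Ac) :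
    splice n (trunc n h) q = splice n h q :=
  splice_congr (trunc_mem_cyl n h) q

noncomputable def Strategy.ofContinuations [∀ i, Nonempty (Ac i)] {i : ι}
    (R : (∀ j, Ac j) → Strategy Ac i) : Strategy Ac i where
  act
    | 0, _ => PMF.pure (Classical.arbitrary _)
    | t + 1, p => (R (p 0)).act t (drop 1 p)
  depends_on_past
    | 0, _, _, _ => rfl
    | t + 1, p, q, hpq => by
      simp only
      rw [hpq 0 t.succ_pos]
      exact (R (q 0)).depends_on_past t _ _ fun s hs => hpq (1 + s) (by omega)

theorem Strategy.shift_one_ofContinuations [∀ i, Nonempty (Ac i)] {i : ι}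
    (R : (∀ j, Ac j) → Strategy Ac i) (b : ∀ j, Ac j) :
    (ofContinuations R).shift 1 (fun _ => b) = R b := by
  refine Strategy.ext (funext₂ fun t q => ?_)
  simp only [shift, Nat.add_comm 1 t, ofContinuations, drop_splice]
  rfl

theorem cyl_inter_cyl {m n : ℕ} {p w : Play Ac} (hpw : ∀ t < min m n, p t = w t) :
    cyl m p ∩ cyl n w = cyl (max m n) (splice n w (drop n p)) := by
  ext q
  simp only [cyl, Set.mem_inter_iff, Set.mem_ofPred_eq, splice, drop]
  refine ⟨fun ⟨hqp, hqw⟩ t ht => ?_, fun hq => ⟨fun t ht => ?_, fun t ht => ?_⟩⟩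
  · split_ifs with htn
    · exact hqw t htn
    · rw [Nat.add_sub_cancel' (not_lt.1 htn)]; exact hqp t (by omega)
  · have := hq t (by omega)
    split_ifs at this with htn
    · rw [this, hpw t (by omega)]
    · rwa [Nat.add_sub_cancel' (not_lt.1 htn)] at this
  · simpa [ht] using hq t (by omega)

theorem preimage_splice_cyl {m n : ℕ} {p w : Play Ac} (hpw : ∀ t < min m n, p t = w t) :
    splice n w ⁻¹' cyl m p = cyl (m - n) (drop n p) := by
  ext q
  simp only [cyl, Set.mem_preimage, Set.mem_ofPred_eq, splice, drop]
  refine ⟨fun hq s hs => ?_, fun hq t ht => ?_⟩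
  · simpa using hq (n + s) (by omega)
  · split_ifs with htn
    · exact (hpw t (by omega)).symm
    · rw [hq (t - n) (by omega), Nat.add_sub_cancel' (not_lt.1 htn)]

theorem cyl_inter_cyl_eq_empty {m n : ℕ} {p w : Play Ac} (hpw : ¬ ∀ t < min m n, p t = w t) :
    cyl m p ∩ cyl n w = ∅ := by
  push Not at hpw
  obtain ⟨t, ht, hne⟩ := hpw
  exact Set.eq_empty_of_forall_notMem fun q ⟨hqp, hqw⟩ =>
    hne ((hqp t (by omega)).symm.trans (hqw t (by omega)))

theorem preimage_splice_cyl_eq_empty {m n : ℕ} {p w : Play Ac}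
    (hpw : ¬ ∀ t < min m n, p t = w t) : splice n w ⁻¹' cyl m p = ∅ :=
  Set.eq_empty_of_forall_notMem fun q hq =>
    (cyl_inter_cyl_eq_empty hpw).subset ⟨hq, splice_mem_cyl n w q⟩

theorem pairwise_disjoint_cyl_one :
    Pairwise (Function.onFun Disjoint fun b : ∀ j, Ac j => cyl 1 fun _ => b) :=
  fun _ _ hne => Set.disjoint_left.2 fun _ hb hb' =>
    hne ((hb 0 one_pos).symm.trans (hb' 0 one_pos))

theorem iUnion_cyl_one : ⋃ b : ∀ j, Ac j, cyl 1 (fun _ => b) = Set.univ :=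
  Set.eq_univ_of_forall fun q => Set.mem_iUnion.2 ⟨q 0, fun t ht => by rw [Nat.lt_one_iff.1 ht]⟩

def history (n : ℕ) (q : Play Ac) : Fin n → ∀ j, Ac j := fun t => q t

theorem preimage_history_singleton (n : ℕ) (p : Play Ac) :
    history n ⁻¹' {history n p} = cyl n p := by
  ext q; simp [history, cyl, funext_iff, Fin.forall_iff]

theorem exists_preimage_history_singleton_eq_cyl [∀ i, Nonempty (Ac i)] (n : ℕ)
    (v : Fin n → ∀ j, Ac j) : ∃ p, history n ⁻¹' {v} = cyl n p := by
  refine ⟨fun t => if h : t < n then v ⟨t, h⟩ else fun _ => Classical.arbitrary _, ?_⟩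
  rw [← preimage_history_singleton]
  congr
  funext t
  simp [history, t.2]

def cylSets : Set (Set (Play Ac)) := {s | ∃ n p, s = cyl n p}

theorem isPiSystem_cylSets : IsPiSystem (cylSets (Ac := Ac)) := by
  rintro _ ⟨m, p, rfl⟩ _ ⟨n, w, rfl⟩ ⟨q, hqp, hqw⟩
  wlog hmn : m ≤ n generalizing m n p w
  · rw [Set.inter_comm]; exact this n w m p hqw hqp (by omega)
  refine ⟨n, w, Set.inter_eq_self_of_subset_right fun r hr t ht => ?_⟩
  rw [← hqp t ht, hr t (ht.trans_le hmn), hqw t (ht.trans_le hmn)]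

theorem measurable_history_generateFrom [Fintype ι] [∀ i, Finite (Ac i)]
    [∀ i, Nonempty (Ac i)] (n : ℕ) :
    Measurable[MeasurableSpace.generateFrom cylSets, ⊤] (history (Ac := Ac) n) := by
  intro S _
  rw [← Set.biUnion_of_singleton S, Set.preimage_iUnion₂]
  refine MeasurableSet.biUnion S.to_countable fun v _ => ?_
  obtain ⟨p, hp⟩ := exists_preimage_history_singleton_eq_cyl n v
  exact MeasurableSpace.measurableSet_generateFrom ⟨n, p, hp⟩

end Plays

section Measurability

variable {ι : Type*} {Ac : ι → Type*} [∀ i, MeasurableSpace (Ac i)]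

theorem measurableSet_cyl [Countable ι] [∀ i, MeasurableSingletonClass (Ac i)] (n : ℕ)
    (p : Play Ac) : MeasurableSet (cyl n p) := by
  have : cyl n p = ⋂ t ∈ Finset.range n, (fun q : Play Ac => q t) ⁻¹' {p t} := by
    ext q; simp [cyl]
  rw [this]
  exact Finset.measurableSet_biInter _ fun t _ =>
    measurable_pi_apply t (measurableSet_singleton _)

theorem measurable_splice (n : ℕ) (h : Play Ac) : Measurable (splice n h) := by
  refine measurable_pi_lambda _ fun t => ?_
  by_cases ht : t < n
  · simp only [splice, ht, if_true, measurable_const]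
  · simpa [splice, ht] using measurable_pi_apply (t - n)

variable [Fintype ι] [∀ i, Finite (Ac i)] [∀ i, Nonempty (Ac i)]
  [∀ i, MeasurableSingletonClass (Ac i)]

theorem generateFrom_cylSets :
    MeasurableSpace.generateFrom (cylSets (Ac := Ac))
      = (inferInstance : MeasurableSpace (Play Ac)) := by
  refine le_antisymm (MeasurableSpace.generateFrom_le ?_) (iSup_le fun t => ?_)
  · rintro _ ⟨n, p, rfl⟩
    exact measurableSet_cyl n p
  · have : (fun q : Play Ac => q t) = (fun v => v (Fin.last t)) ∘ history (t + 1) := rfl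
    rw [this]
    exact (measurable_from_top.comp (measurable_history_generateFrom (t + 1))).comap_le

theorem measurable_history (n : ℕ) : Measurable[_, ⊤] (history (Ac := Ac) n) :=
  (measurable_history_generateFrom n).mono generateFrom_cylSets.le le_rfl

end Measurability

section MarkovProperty

variable {ι : Type*} [Fintype ι] {Ac : ι → Type*} [∀ i, MeasurableSpace (Ac i)]

instance (PM : PlayMeasure Ac) (ρ : Profile Ac) : IsProbabilityMeasure (PM.μ ρ) := PM.isProb ρ

theorem measure_cyl (PM : PlayMeasure Ac) (ρ : Profile Ac) (n : ℕ) (p : Play Ac) :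
    PM.μ ρ (cyl n p) = ∏ t ∈ Finset.range n, ∏ i, ((ρ i).act t p) (p t i) :=
  PM.cyl ρ n p

theorem measure_cyl_eq_mul (PM : PlayMeasure Ac) (ρ : Profile Ac) {n m : ℕ} (hnm : n ≤ m)
    {w p : Play Ac} (hpw : p ∈ cyl n w) :
    PM.μ ρ (cyl m p) = PM.μ ρ (cyl n w) * PM.μ (ρ.shift n w) (cyl (m - n) (drop n p)) := by
  simp only [measure_cyl]
  conv_lhs => rw [← Nat.add_sub_cancel' hnm, Finset.prod_range_add]
  congr 1
  · refine Finset.prod_congr rfl fun t ht => Finset.prod_congr rfl fun j _ => ?_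
    have ht : t < n := Finset.mem_range.1 ht
    rw [(ρ j).depends_on_past t p w fun s hs => hpw s (hs.trans ht), hpw t ht]
  · refine Finset.prod_congr rfl fun s _ => Finset.prod_congr rfl fun j _ => ?_
    simp only [Profile.shift, Strategy.shift, splice_drop hpw, drop]

variable [∀ i, Finite (Ac i)] [∀ i, Nonempty (Ac i)] [∀ i, MeasurableSingletonClass (Ac i)]

theorem measure_ext_cyl {μ ν : Measure (Play Ac)} [IsFiniteMeasure μ]
    (h : ∀ n p, μ (cyl n p) = ν (cyl n p)) : μ = ν := by
  refine ext_of_generate_finite _ generateFrom_cylSets.symm isPiSystem_cylSets ?_ ?_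
  · rintro _ ⟨n, p, rfl⟩
    exact h n p
  · have huniv : cyl 0 (fun _ _ => Classical.arbitrary _ : Play Ac) = Set.univ := by simp [cyl]
    rw [← huniv, h]

/-- Markov property: given the history `w` up to stage `n`, the play continues as a play of the
continuation profile `ρ.shift n w`. -/
theorem restrict_cyl (PM : PlayMeasure Ac) (ρ : Profile Ac) (n : ℕ) (w : Play Ac) :
    (PM.μ ρ).restrict (cyl n w)
      = PM.μ ρ (cyl n w) • (PM.μ (ρ.shift n w)).map (splice n w) := by
  refine measure_ext_cyl fun m p => ?_
  rw [Measure.restrict_apply (measurableSet_cyl m p), Measure.smul_apply, smul_eq_mul,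
    Measure.map_apply (measurable_splice n w) (measurableSet_cyl m p)]
  by_cases hpw : ∀ t < min m n, p t = w t
  · rw [cyl_inter_cyl hpw, preimage_splice_cyl hpw,
      measure_cyl_eq_mul PM ρ (le_max_right m n) (splice_mem_cyl n w _), drop_splice,
      show max m n - n = m - n by omega]
  · rw [cyl_inter_cyl_eq_empty hpw, preimage_splice_cyl_eq_empty hpw]
    simp

theorem setIntegral_cyl (PM : PlayMeasure Ac) (ρ : Profile Ac) (n : ℕ) (w : Play Ac)
    {g : Play Ac → ℝ} (hg : Measurable g) :
    ∫ q in cyl n w, g q ∂PM.μ ρ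
      = (PM.μ ρ).real (cyl n w) * ∫ q, g (splice n w q) ∂PM.μ (ρ.shift n w) := by
  rw [restrict_cyl, integral_smul_measure,
    integral_map (measurable_splice n w).aemeasurable hg.aestronglyMeasurable, smul_eq_mul,
    measureReal_def]

end MarkovProperty

theorem integral_le_of_forall_setIntegral_le {Ω Z : Type*} [MeasurableSpace Ω] {μ : Measure Ω}
    [IsProbabilityMeasure μ] [Countable Z] {S : Z → Set Ω} (hS : ∀ z, MeasurableSet (S z))
    (hdisj : Pairwise (Function.onFun Disjoint S)) (hcover : ⋃ z, S z = Set.univ)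
    {g : Ω → ℝ} (hg : Integrable g μ) {B : ℝ}
    (h : ∀ z, ∫ q in S z, g q ∂μ ≤ μ.real (S z) * B) : ∫ q, g q ∂μ ≤ B := by
  have hsum_g := hasSum_integral_iUnion hS hdisj hg.integrableOn
  have hsum_B := hasSum_integral_iUnion hS hdisj (integrable_const (μ := μ) B).integrableOn
  simp only [hcover, setIntegral_univ, setIntegral_const, smul_eq_mul, probReal_univ, one_mul]
    at hsum_g hsum_B
  exact hasSum_le h hsum_g hsum_B

theorem BddPayoff.integrable {ι : Type*} {Ac : ι → Type*} [∀ i, MeasurableSpace (Ac i)]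
    {g : Play Ac → ℝ} (hg : BddPayoff g) (hm : Measurable g) (μ : Measure (Play Ac))
    [IsFiniteMeasure μ] : Integrable g μ := by
  obtain ⟨C, hC⟩ := hg
  exact .of_bound hm.aestronglyMeasurable C (.of_forall hC)

section Minmax

variable {ι : Type*} [Fintype ι] {Ac : ι → Type*} [∀ i, MeasurableSpace (Ac i)]

theorem abs_expPay_le (PM : PlayMeasure Ac) (ρ : Profile Ac) {g : Play Ac → ℝ} {C : ℝ}
    (hC : ∀ p, |g p| ≤ C) : |expPay PM ρ g| ≤ C := by
  simpa [expPay] using norm_integral_le_of_norm_le_const (μ := PM.μ ρ)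
    (.of_forall fun p => (Real.norm_eq_abs _).trans_le (hC p))

theorem bddAbove_range_expPay (PM : PlayMeasure Ac) {g : Play Ac → ℝ} (hg : BddPayoff g)
    {α : Type*} (ρ : α → Profile Ac) : BddAbove (Set.range fun a => expPay PM (ρ a) g) := by
  obtain ⟨C, hC⟩ := hg
  exact ⟨C, Set.forall_mem_range.2 fun a => (abs_le.1 (abs_expPay_le PM (ρ a) hC)).2⟩

theorem bddBelow_range_iSup_expPay_update [DecidableEq ι] [∀ i, Nonempty (Ac i)]
    (PM : PlayMeasure Ac) {g : Play Ac → ℝ} (hg : BddPayoff g) (i : ι) :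
    BddBelow (Set.range fun τ : Profile Ac =>
      ⨆ σi : Strategy Ac i, expPay PM (Function.update τ i σi) g) := by
  obtain ⟨C, hC⟩ := hg
  refine ⟨-C, Set.forall_mem_range.2 fun τ => ?_⟩
  exact (abs_le.1 (abs_expPay_le PM _ hC)).1.trans
    (le_ciSup (bddAbove_range_expPay PM ⟨C, hC⟩ _) (Classical.arbitrary _))

variable [∀ i, Finite (Ac i)] [∀ i, Nonempty (Ac i)] [∀ i, MeasurableSingletonClass (Ac i)]

theorem le_expPay_of_forall_firstStage (PM : PlayMeasure Ac) (ρ : Profile Ac) {g : Play Ac → ℝ}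
    (hg : Measurable g) (hgb : BddPayoff g) {c : ℝ}
    (h : ∀ b : ∀ j, Ac j,
      c ≤ expPay PM (ρ.shift 1 fun _ => b) fun q => g (splice 1 (fun _ => b) q)) :
    c ≤ expPay PM ρ g := by
  have hneg : ∫ q, -g q ∂PM.μ ρ ≤ -c := by
    refine integral_le_of_forall_setIntegral_le (fun b => measurableSet_cyl 1 _)
      pairwise_disjoint_cyl_one iUnion_cyl_one (hgb.integrable hg _).neg fun b => ?_
    rw [setIntegral_cyl PM ρ 1 _ hg.neg]
    simp only [Pi.neg_apply, integral_neg, mul_neg, neg_le_neg_iff]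
    exact mul_le_mul_of_nonneg_left (h b) measureReal_nonneg
  rw [integral_neg] at hneg
  exact le_of_neg_le_neg hneg

variable [DecidableEq ι]

/-- Against a profile `τ` that nearly attains the minmax value of `g`, player `i` can play
anything at the first stage and then a near-best reply in each continuation game. -/
theorem minmax_le_minmax_of_continuation (PM : PlayMeasure Ac) (i : ι) {g g' : Play Ac → ℝ}
    (hg : Measurable g) (hgb : BddPayoff g)
    (hcont : ∀ (b : ∀ j, Ac j) (q : Play Ac), g (splice 1 (fun _ => b) q) = g' q) :
    minmax PM g' i ≤ minmax PM g i := by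
  have hg'b : BddPayoff g' := by
    obtain ⟨C, hC⟩ := hgb
    exact ⟨C, fun q => hcont (fun _ => Classical.arbitrary _) q ▸ hC _⟩
  refine le_of_forall_pos_le_add fun η hη => ?_
  obtain ⟨τ, hτ⟩ : ∃ τ : Profile Ac,
      ⨆ σi : Strategy Ac i, expPay PM (Function.update τ i σi) g < minmax PM g i + η / 2 :=
    exists_lt_of_ciInf_lt (lt_add_of_pos_right (minmax PM g i) (half_pos hη))
  choose R hR using fun b : ∀ j, Ac j => exists_lt_of_lt_ciSup (sub_lt_self
    (⨆ ρi, expPay PM (Function.update (τ.shift 1 fun _ => b) i ρi) g') (half_pos hη))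
  have hlow : minmax PM g' i - η / 2
      ≤ expPay PM (Function.update τ i (Strategy.ofContinuations R)) g := by
    refine le_expPay_of_forall_firstStage PM _ hg hgb fun b => ?_
    rw [Profile.shift_update, Strategy.shift_one_ofContinuations,
      show (fun q => g (splice 1 (fun _ => b) q)) = g' from funext (hcont b)]
    have : minmax PM g' i ≤ _ :=
      ciInf_le (bddBelow_range_iSup_expPay_update PM hg'b i) (τ.shift 1 fun _ => b)
    linarith [hR b]
  have := le_ciSup (bddAbove_range_expPay PM hgb (Function.update τ i))
    (Strategy.ofContinuations R)
  linarith

theorem minmax_comp_splice_le (PM : PlayMeasure Ac) (i : ι) {g : Play Ac → ℝ}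
    (hg : Measurable g) (hgb : BddPayoff g) (htail : TailMeasurable g) (n : ℕ) (h : Play Ac) :
    minmax PM (fun q => g (splice n h q)) i ≤ minmax PM g i := by
  induction n with
  | zero => simp only [splice_zero, le_refl]
  | succ n ih =>
    obtain ⟨C, hC⟩ := hgb
    refine le_trans (minmax_le_minmax_of_continuation PM i (hg.comp (measurable_splice n h))
      ⟨C, fun q => hC _⟩ fun b q => htail _ _ ⟨n + 1, fun t ht => ?_⟩) ih
    have h₁ : ¬ t < n := by omega
    have h₂ : ¬ t - n < 1 := by omega
    have h₃ : ¬ t < n + 1 := by omega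
    simp [splice, h₁, h₂, h₃, Nat.sub_sub]

theorem exists_forall_expPay_update_le_minmax_add (PM : PlayMeasure Ac) (i : ι)
    {g : Play Ac → ℝ} (hg : Measurable g) (hgb : BddPayoff g) (htail : TailMeasurable g)
    (n : ℕ) (h : Play Ac) {η : ℝ} (hη : 0 < η) :
    ∃ ρ : Profile Ac, ∀ ρi : Strategy Ac i,
      expPay PM (Function.update ρ i ρi) (fun q => g (splice n h q)) ≤ minmax PM g i + η := by
  obtain ⟨ρ, hρ⟩ := exists_lt_of_ciInf_lt
    ((minmax_comp_splice_le PM i hg hgb htail n h).trans_lt (lt_add_of_pos_right _ hη))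
  obtain ⟨C, hC⟩ := hgb
  refine ⟨ρ, fun ρi => le_trans ?_ hρ.le⟩
  exact le_ciSup (bddAbove_range_expPay PM ⟨C, fun q => hC _⟩ (Function.update ρ i)) ρi

end Minmax

section Levy

variable {ι : Type*} [Fintype ι] {Ac : ι → Type*} [∀ i, MeasurableSpace (Ac i)]

theorem subExp_congr (PM : PlayMeasure Ac) (σ : Profile Ac) (g : Play Ac → ℝ) {n : ℕ}
    {h h' : Play Ac} (hh : h ∈ cyl n h') : subExp PM σ g n h = subExp PM σ g n h' := by
  simp only [subExp, splice_congr hh, Strategy.shift_congr _ hh]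

theorem BddPayoff.subExp (PM : PlayMeasure Ac) (σ : Profile Ac) {g : Play Ac → ℝ}
    (hg : BddPayoff g) (n : ℕ) : BddPayoff (subExp PM σ g n) := by
  obtain ⟨C, hC⟩ := hg
  exact ⟨C, fun h => abs_expPay_le PM (σ.shift n h) fun q => hC (splice n h q)⟩

variable [∀ i, Finite (Ac i)] [∀ i, Nonempty (Ac i)] [∀ i, MeasurableSingletonClass (Ac i)]

def historyFiltration : Filtration ℕ (inferInstance : MeasurableSpace (Play Ac)) where
  seq n := MeasurableSpace.comap (history n) ⊤
  mono' m n hmn := by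
    have : history (Ac := Ac) m = (fun v t => v (Fin.castLE hmn t)) ∘ history n := rfl
    show MeasurableSpace.comap (history m) ⊤ ≤ MeasurableSpace.comap (history n) ⊤
    rw [this, ← MeasurableSpace.comap_comp]
    exact MeasurableSpace.comap_mono le_top
  le' n := (measurable_history n).comap_le

theorem le_iSup_historyFiltration :
    (inferInstance : MeasurableSpace (Play Ac)) ≤ ⨆ n, historyFiltration (Ac := Ac) n := by
  refine iSup_le fun t => Measurable.comap_le ?_
  have : (fun q : Play Ac => q t) = (fun v => v (Fin.last t)) ∘ history (t + 1) := rfl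
  rw [this]
  exact (measurable_from_top.comp (comap_measurable _)).mono
    (le_iSup (fun n => historyFiltration (Ac := Ac) n) (t + 1)) le_rfl

theorem measurable_historyFiltration_of_forall_mem_cyl {β : Type*} [MeasurableSpace β] {n : ℕ}
    {G : Play Ac → β} (hG : ∀ p q, q ∈ cyl n p → G q = G p) :
    Measurable[historyFiltration n] G := by
  refine fun T _ => ⟨history n '' (G ⁻¹' T), trivial,
    Set.ext fun q => ⟨?_, fun hq => ⟨q, hq, rfl⟩⟩⟩
  rintro ⟨p, hp, hpq⟩
  have hq : q ∈ cyl n p := by rw [← preimage_history_singleton]; exact hpq.symm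
  rw [Set.mem_preimage, hG p q hq]
  exact hp

theorem setIntegral_preimage_history_eq {μ : Measure (Play Ac)} {g g' : Play Ac → ℝ}
    (hg : Integrable g μ) (hg' : Integrable g' μ) {n : ℕ}
    (h : ∀ p, ∫ q in cyl n p, g q ∂μ = ∫ q in cyl n p, g' q ∂μ)
    (S : Set (Fin n → ∀ j, Ac j)) :
    ∫ q in history n ⁻¹' S, g q ∂μ = ∫ q in history n ⁻¹' S, g' q ∂μ := by
  have hS : history n ⁻¹' S = ⋃ v : S, history n ⁻¹' {v.1} := by ext; simp
  have hdisj : Pairwise (Function.onFun Disjoint fun v : S => history (Ac := Ac) n ⁻¹' {v.1}) :=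
    fun v w hvw => (Set.disjoint_singleton.2 (Subtype.coe_injective.ne hvw)).preimage _
  have hmeas (v : S) : MeasurableSet (history (Ac := Ac) n ⁻¹' {v.1}) :=
    measurable_history n trivial
  rw [hS, integral_iUnion hmeas hdisj hg.integrableOn,
    integral_iUnion hmeas hdisj hg'.integrableOn]
  refine tsum_congr fun v => ?_
  obtain ⟨p, hp⟩ := exists_preimage_history_singleton_eq_cyl n v.1
  rw [hp, h p]

theorem setIntegral_cyl_subExp (PM : PlayMeasure Ac) (σ : Profile Ac) {g : Play Ac → ℝ}
    (hg : Measurable g) (n : ℕ) (p : Play Ac) :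
    ∫ q in cyl n p, subExp PM σ g n q ∂PM.μ σ = ∫ q in cyl n p, g q ∂PM.μ σ := by
  rw [setIntegral_congr_fun (measurableSet_cyl n p) fun q hq => subExp_congr PM σ g hq,
    setIntegral_const, setIntegral_cyl PM σ n p hg, smul_eq_mul]
  rfl

theorem subExp_ae_eq_condExp (PM : PlayMeasure Ac) (σ : Profile Ac) {g : Play Ac → ℝ}
    (hg : Measurable g) (hgb : BddPayoff g) (n : ℕ) :
    subExp PM σ g n =ᵐ[PM.μ σ] (PM.μ σ)[g | historyFiltration n] := by
  have hmeas : Measurable[historyFiltration n] (subExp PM σ g n) :=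
    measurable_historyFiltration_of_forall_mem_cyl fun p q hq => subExp_congr PM σ g hq
  have hint := (hgb.subExp PM σ n).integrable
    (hmeas.mono (historyFiltration.le n) le_rfl) (PM.μ σ)
  refine ae_eq_condExp_of_forall_setIntegral_eq (historyFiltration.le n) (hgb.integrable hg _)
    (fun _ _ _ => hint.integrableOn) ?_ hmeas.stronglyMeasurable.aestronglyMeasurable
  rintro _ ⟨S, -, rfl⟩ -
  exact setIntegral_preimage_history_eq hint (hgb.integrable hg _)
    (setIntegral_cyl_subExp PM σ hg n) S

/-- By Lévy's zero-one law, `subExp PM σ g n q` tends to `g q` for almost every play `q`. -/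
theorem ae_le_of_forall_le_subExp (PM : PlayMeasure Ac) (σ : Profile Ac) {g : Play Ac → ℝ}
    (hg : Measurable g) (hgb : BddPayoff g) {c : ℝ} (h : ∀ n q, c ≤ subExp PM σ g n q) :
    ∀ᵐ q ∂PM.μ σ, c ≤ g q := by
  have hlim := (hgb.integrable hg (PM.μ σ)).tendsto_ae_condExp (ℱ := historyFiltration)
    (hg.mono le_iSup_historyFiltration le_rfl).stronglyMeasurable
  have hcond := ae_all_iff.2 fun n => subExp_ae_eq_condExp PM σ hg hgb n
  filter_upwards [hlim, hcond] with q hq hq'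
  exact ge_of_tendsto hq (.of_forall fun n => hq' n ▸ h n q)

end Levy

section Trigger

variable {ι : Type*} {Ac : ι → Type*}

theorem mem_cyl_succ_update {t : ℕ} {pstar q : Play Ac} {a : ∀ j, Ac j} :
    q ∈ cyl (t + 1) (Function.update pstar t a) ↔ q ∈ cyl t pstar ∧ q t = a := by
  refine ⟨fun hq => ⟨fun s hs => ?_, by simpa using hq t t.lt_succ_self⟩,
    fun ⟨hq, hqt⟩ s hs => ?_⟩
  · simpa [hs.ne] using hq s (hs.trans t.lt_succ_self)
  · rcases (Nat.lt_succ_iff_lt_or_eq.1 hs) with hs | rfl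
    · simpa [hs.ne] using hq s hs
    · simpa using hqt

/-- Plays are sorted by their first deviation from `pstar`: the stage `t` and the action profile
`a ≠ pstar t` played there. -/
def deviationPiece (pstar : Play Ac) :
    Option {z : ℕ × (∀ j, Ac j) // z.2 ≠ pstar z.1} → Set (Play Ac)
  | none => {pstar}
  | some ⟨(t, a), _⟩ => cyl (t + 1) (Function.update pstar t a)

theorem pairwise_disjoint_deviationPiece (pstar : Play Ac) :
    Pairwise (Function.onFun Disjoint (deviationPiece pstar)) := by
  have key : ∀ {t t' a a'} {q : Play Ac}, a ≠ pstar t → t ≤ t' →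
      q ∈ cyl (t + 1) (Function.update pstar t a) →
      q ∈ cyl (t' + 1) (Function.update pstar t' a') → t = t' ∧ a = a' := by
    intro t t' a a' q ha htt' hq hq'
    rw [mem_cyl_succ_update] at hq hq'
    rcases htt'.lt_or_eq with htt' | rfl
    · exact absurd (hq.2.symm.trans (hq'.1 t htt')) ha
    · exact ⟨rfl, hq.2.symm.trans hq'.2⟩
  rintro (_ | ⟨⟨t, a⟩, ha⟩) (_ | ⟨⟨t', a'⟩, ha'⟩) hne <;>
    refine Set.disjoint_left.2 fun q hq hq' => hne ?_
  · rfl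
  · rw [Set.mem_singleton_iff.1 hq, deviationPiece, mem_cyl_succ_update] at hq'
    exact absurd hq'.2.symm ha'
  · rw [Set.mem_singleton_iff.1 hq', deviationPiece, mem_cyl_succ_update] at hq
    exact absurd hq.2.symm ha
  · obtain ⟨rfl, rfl⟩ : t = t' ∧ a = a' := by
      rcases le_total t t' with h | h
      · exact key ha h hq hq'
      · exact (key ha' h hq' hq).imp Eq.symm Eq.symm
    rfl

theorem iUnion_deviationPiece (pstar : Play Ac) : ⋃ z, deviationPiece pstar z = Set.univ := by
  classical
  refine Set.eq_univ_of_forall fun q => Set.mem_iUnion.2 ?_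
  by_cases hq : q = pstar
  · exact ⟨none, hq⟩
  have hex : ∃ s, q s ≠ pstar s := Function.ne_iff.1 hq
  refine ⟨some ⟨(Nat.find hex, q (Nat.find hex)), Nat.find_spec hex⟩, ?_⟩
  exact mem_cyl_succ_update.2 ⟨fun s hs => not_not.1 (Nat.find_min hex hs), rfl⟩

theorem measurableSet_deviationPiece [Countable ι] [∀ i, MeasurableSpace (Ac i)]
    [∀ i, Countable (Ac i)] [∀ i, MeasurableSingletonClass (Ac i)] (pstar : Play Ac)
    (z : Option {z : ℕ × (∀ j, Ac j) // z.2 ≠ pstar z.1}) :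
    MeasurableSet (deviationPiece pstar z) := by
  rcases z with _ | ⟨⟨t, a⟩, _⟩
  · exact measurableSet_singleton pstar
  · exact measurableSet_cyl _ _

variable [∀ i, Nonempty (Ac i)] (pstar : Play Ac) (Fpun : ι → ℕ → Play Ac → Profile Ac)

open Classical in
/-- Everybody plays along `pstar` until the first stage `s` where the play leaves it; if a single
player `d` deviated at `s`, from then on everybody follows `Fpun d (s + 1)`. Feeding `Fpun` the
truncated history keeps the punishment a function of the past only. -/
noncomputable def triggerAct (j : ι) (m : ℕ) (p : Play Ac) : PMF (Ac j) :=
  if h : ∃ s < m, p s ≠ pstar s then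
    if hd : ∃! d, p (Nat.find h) d ≠ pstar (Nat.find h) d then
      (Fpun hd.choose (Nat.find h + 1) (trunc (Nat.find h + 1) p) j).act
        (m - (Nat.find h + 1)) (drop (Nat.find h + 1) p)
    else PMF.pure (pstar m j)
  else PMF.pure (pstar m j)

noncomputable def trigger : Profile Ac := fun j =>
  { act := fun m p => triggerAct pstar Fpun j m (trunc m p)
    depends_on_past := fun t p q hpq => by simp only [trunc_congr hpq] }

theorem trigger_act_of_mem_cyl {j : ι} {m : ℕ} {p : Play Ac} (hp : p ∈ cyl m pstar) :
    (trigger pstar Fpun j).act m p = PMF.pure (pstar m j) := by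
  have : ¬ ∃ s < m, trunc m p s ≠ pstar s := by
    push Not
    exact fun s hs => (trunc_mem_cyl m p s hs).trans (hp s hs)
  exact dif_neg this

theorem triggerAct_of_deviation {i j : ι} {t m : ℕ} {p : Play Ac} (hp : p ∈ cyl t pstar)
    (htm : t < m) (hi : p t i ≠ pstar t i) (hun : ∀ k, p t k ≠ pstar t k → k = i) :
    triggerAct pstar Fpun j m p
      = (Fpun i (t + 1) (trunc (t + 1) p) j).act (m - (t + 1)) (drop (t + 1) p) := by
  classical
  have hex : ∃ s < m, p s ≠ pstar s := ⟨t, htm, fun h => hi (congrFun h i)⟩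
  have hfind : Nat.find hex = t :=
    (Nat.find_eq_iff hex).2 ⟨⟨htm, fun h => hi (congrFun h i)⟩, fun s hs h => h.2 (hp s hs)⟩
  have hd : ∃! d, p t d ≠ pstar t d := ⟨i, hi, hun⟩
  rw [triggerAct, dif_pos hex]
  simp only [hfind, dif_pos hd, hun _ hd.choose_spec.1]

theorem Strategy.shift_trigger {i j : ι} {t : ℕ} {w : Play Ac} (hw : w ∈ cyl t pstar)
    (hi : w t i ≠ pstar t i) (hun : ∀ k, w t k ≠ pstar t k → k = i) :
    (trigger pstar Fpun j).shift (t + 1) w = Fpun i (t + 1) (trunc (t + 1) w) j := by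
  refine Strategy.ext (funext₂ fun r q => ?_)
  set p := trunc (t + 1 + r) (splice (t + 1) w q) with hp
  have hpw : p ∈ cyl (t + 1) w := fun s hs => by
    rw [hp, trunc_mem_cyl _ _ s (by omega)]; exact splice_mem_cyl _ w q s hs
  have hpt : p t = w t := hpw t t.lt_succ_self
  show triggerAct pstar Fpun j (t + 1 + r) p = _
  rw [triggerAct_of_deviation pstar Fpun (fun s hs => (hpw s (by omega)).trans (hw s hs))
      (by omega) (hpt ▸ hi) (hpt ▸ hun), trunc_congr hpw, Nat.add_sub_cancel_left]
  refine (Fpun i (t + 1) _ j).depends_on_past r _ _ fun s hs => ?_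
  rw [drop, hp, trunc_mem_cyl _ _ _ (by omega), splice_add_apply]

variable [Fintype ι] [∀ i, MeasurableSpace (Ac i)]

theorem measure_deviationPiece_eq_zero (PM : PlayMeasure Ac) {ρ : Profile Ac} {t : ℕ}
    {a : ∀ j, Ac j} (ha : a ≠ pstar t) {k : ι} (hρ : ρ k = trigger pstar Fpun k)
    (hk : a k ≠ pstar t k) : PM.μ ρ (deviationPiece pstar (some ⟨(t, a), ha⟩)) = 0 := by
  have hw : Function.update pstar t a ∈ cyl t pstar := fun s hs => Function.update_of_ne hs.ne _ _
  rw [deviationPiece, measure_cyl]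
  refine Finset.prod_eq_zero (Finset.self_mem_range_succ t)
    (Finset.prod_eq_zero (Finset.mem_univ k) ?_)
  rw [hρ, trigger_act_of_mem_cyl pstar Fpun hw, PMF.pure_apply, Function.update_self, if_neg hk]

theorem expPay_trigger [∀ i, Countable (Ac i)] (PM : PlayMeasure Ac) (g : Play Ac → ℝ) :
    expPay PM (trigger pstar Fpun) g = g pstar := by
  have hsub : {q | q ≠ pstar} ⊆ ⋃ z, deviationPiece pstar (some z) := fun q hq => by
    obtain ⟨_ | z, hz⟩ := Set.mem_iUnion.1 ((iUnion_deviationPiece pstar).ge (Set.mem_univ q))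
    · exact absurd hz hq
    · exact Set.mem_iUnion.2 ⟨z, hz⟩
  have hae : ∀ᵐ q ∂PM.μ (trigger pstar Fpun), q = pstar := by
    refine measure_mono_null hsub (measure_iUnion_null fun ⟨(t, a), ha⟩ => ?_)
    obtain ⟨k, hk⟩ := Function.ne_iff.1 ha
    exact measure_deviationPiece_eq_zero pstar Fpun PM ha rfl hk
  rw [expPay, integral_congr_ae (hae.mono fun q hq => congrArg g hq), integral_const]
  simp

variable [DecidableEq ι] [∀ i, Finite (Ac i)] [∀ i, MeasurableSingletonClass (Ac i)]

theorem setIntegral_deviationPiece_le (PM : PlayMeasure Ac) {i : ι} (σi : Strategy Ac i)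
    {g : Play Ac → ℝ} (hg : Measurable g) {B : ℝ}
    (hpun : ∀ n h ρi,
      expPay PM (Function.update (Fpun i n h) i ρi) (fun q => g (splice n h q)) ≤ B)
    {t : ℕ} {a : ∀ j, Ac j} (ha : a ≠ pstar t) :
    ∫ q in deviationPiece pstar (some ⟨(t, a), ha⟩), g q
        ∂PM.μ (Function.update (trigger pstar Fpun) i σi)
      ≤ (PM.μ (Function.update (trigger pstar Fpun) i σi)).real
          (deviationPiece pstar (some ⟨(t, a), ha⟩)) * B := by
  set w := Function.update pstar t a
  have hw : w ∈ cyl t pstar := fun s hs => Function.update_of_ne hs.ne _ _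
  have hwt : w t = a := Function.update_self ..
  by_cases honly : ∀ k, a k ≠ pstar t k → k = i
  · obtain ⟨k, hk⟩ := Function.ne_iff.1 ha
    have hi : a i ≠ pstar t i := honly k hk ▸ hk
    have hshift : Profile.shift (Function.update (trigger pstar Fpun) i σi) (t + 1) w
        = Function.update (Fpun i (t + 1) (trunc (t + 1) w)) i (σi.shift (t + 1) w) := by
      rw [Profile.shift_update]
      refine funext fun j => ?_
      rcases eq_or_ne j i with rfl | hj
      · simp
      · rw [Function.update_of_ne hj, Function.update_of_ne hj, Profile.shift,
          Strategy.shift_trigger pstar Fpun hw (hwt ▸ hi) (hwt ▸ honly)]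
    rw [deviationPiece, setIntegral_cyl PM _ _ _ hg, hshift]
    refine mul_le_mul_of_nonneg_left ?_ measureReal_nonneg
    simpa only [splice_trunc, expPay] using hpun (t + 1) (trunc (t + 1) w) (σi.shift (t + 1) w)
  · push Not at honly
    obtain ⟨k, hk, hki⟩ := honly
    have h0 := measure_deviationPiece_eq_zero pstar Fpun PM ha (Function.update_of_ne hki σi _) hk
    rw [Measure.restrict_eq_zero.2 h0, integral_zero_measure, measureReal_def, h0]
    simp

theorem expPay_update_trigger_le (PM : PlayMeasure Ac) {i : ι} (σi : Strategy Ac i)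
    {g : Play Ac → ℝ} (hg : Measurable g) (hgb : BddPayoff g) {B : ℝ} (hpstar : g pstar ≤ B)
    (hpun : ∀ n h ρi,
      expPay PM (Function.update (Fpun i n h) i ρi) (fun q => g (splice n h q)) ≤ B) :
    expPay PM (Function.update (trigger pstar Fpun) i σi) g ≤ B := by
  refine integral_le_of_forall_setIntegral_le (measurableSet_deviationPiece pstar)
    (pairwise_disjoint_deviationPiece pstar) (iUnion_deviationPiece pstar)
    (hgb.integrable hg _) ?_
  rintro (_ | ⟨⟨t, a⟩, ha⟩)
  · rw [deviationPiece, integral_singleton, smul_eq_mul]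
    exact mul_le_mul_of_nonneg_left hpstar measureReal_nonneg
  · exact setIntegral_deviationPiece_le pstar Fpun PM σi hg hpun ha

end Trigger

end Blackwell

namespace Blackwell

variable {ι : Type*} [Fintype ι] [DecidableEq ι] [Nonempty ι]
  {Ac : ι → Type*} [∀ i, Fintype (Ac i)] [∀ i, Nonempty (Ac i)]
  [∀ i, MeasurableSpace (Ac i)] [∀ i, DiscreteMeasurableSpace (Ac i)]

theorem exists_eps_equilibrium_of_acceptable_profile_general (PM : PlayMeasure Ac) (f : ι → Play Ac → ℝ)
    (hbdd : ∀ j, BddPayoff (f j)) (hmeas : ∀ j, Measurable (f j))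
    (htail : ∀ j, TailMeasurable (f j))
    (ε : ℝ) (hε : 0 < ε)
    (σ : Profile Ac) (δ : ℝ) (hδε : δ < ε)
    (hgood : ∀ (i : ι) (n : ℕ) (h : Play Ac),
      minmax PM (f i) i - δ ≤ subExp PM σ (f i) n h) :
    ∃ σstar : Profile Ac, IsEpsEquilibrium PM f ε σstar := by
  obtain ⟨pstar, hpstar⟩ : ∃ pstar, ∀ i, minmax PM (f i) i - δ ≤ f i pstar :=
    (ae_all_iff.2 fun i => ae_le_of_forall_le_subExp PM σ (hmeas i) (hbdd i) (hgood i)).exists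
  choose Fpun hFpun using fun i n h => exists_forall_expPay_update_le_minmax_add PM i (hmeas i)
    (hbdd i) (htail i) n h (sub_pos.2 hδε)
  refine ⟨trigger pstar Fpun, fun i σi => ?_⟩
  rw [expPay_trigger]
  exact expPay_update_trigger_le pstar Fpun PM σi (hmeas i) (hbdd i) (by linarith [hpstar i])
    fun n h ρi => (hFpun i n h ρi).trans (by linarith [hpstar i])

/-- If there are a strategy profile `σ` and `δ ∈ [0, ε)` such that in every
subgame every player's expected payoff under `σ` is at least her minmax value minus `δ`,
then the game admits an `ε`-equilibrium. -/
theorem exists_eps_equilibrium_of_acceptable_profile (PM : PlayMeasure Ac) (f : ι → Play Ac → ℝ)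
    (hbdd : ∀ j, BddPayoff (f j)) (hmeas : ∀ j, Measurable (f j))
    (htail : ∀ j, TailMeasurable (f j))
    (ε : ℝ) (hε : 0 < ε)
    (σ : Profile Ac) (δ : ℝ) (hδ0 : 0 ≤ δ) (hδε : δ < ε)
    (hgood : ∀ (i : ι) (n : ℕ) (h : Play Ac),
      minmax PM (f i) i - δ ≤ subExp PM σ (f i) n h) :
    ∃ σstar : Profile Ac, IsEpsEquilibrium PM f ε σstar :=
  exists_eps_equilibrium_of_acceptable_profile_general PM f hbdd hmeas htail ε hε σ δ hδε hgood

end Blackwell
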